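/- Let G be a group and H a subgroup of G. Then H is characteristic in G if and only if there exist a multiplicative morphism property W on Grp containing every isomorphism of Grp, a functor U : WideSubcategory W ⥤ WideSubcategory W, and a natural transformation ε : 𝟭 (WideSubcategory W) ⟶ U, such that H equals the kernel of the underlying group homomorphism of the component ε.app G. -/

import Mathlib

/-!
If `H` is characteristic, the subgroups `K A` of groups `A` generated by all isomorphic copies of
`H` form an isomorphism-invariant family of normal subgroups with `K G = H`. The quotient maps
`A ⟶ A ⧸ K A` are then the components of a natural transformation on the wide subcategory of
morphisms generated by isomorphisms and these quotient maps, since all of those morphisms preserve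
`K` and their induced maps on quotients are again of that kind.

Conversely, an automorphism of `G` is an isomorphism in the wide subcategory, so naturality turns
`ε_G ∘ φ` into `U φ ∘ ε_G` with `U φ` injective; hence `φ` preserves `ker ε_G`.
-/

open CategoryTheory MorphismProperty

universe u

namespace Subgroup

variable {G : Type*} [Group G] (H : Subgroup G)

def supMapEquiv (A : Type*) [Group A] : Subgroup A :=
  ⨆ e : G ≃* A, H.map e.toMonoidHom

theorem map_supMapEquiv_le {A B : Type*} [Group A] [Group B] (e : A ≃* B) :
    (H.supMapEquiv A).map e.toMonoidHom ≤ H.supMapEquiv B := by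
  rw [supMapEquiv, map_iSup]
  refine iSup_le fun φ => ?_
  rw [map_map]
  exact le_iSup_of_le (φ.trans e) le_rfl

instance supMapEquiv_characteristic (A : Type*) [Group A] : (H.supMapEquiv A).Characteristic :=
  characteristic_iff_map_le.mpr H.map_supMapEquiv_le

theorem supMapEquiv_self [hH : H.Characteristic] : H.supMapEquiv G = H :=
  le_antisymm (iSup_le fun e => (characteristic_iff_map_eq.mp hH e).le)
    (le_iSup_of_le (MulEquiv.refl G) fun x hx => ⟨x, hx, rfl⟩)

end Subgroup

namespace GrpCat

variable (K : ∀ A : GrpCat.{u}, Subgroup A)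

def preservesFamily : MorphismProperty GrpCat.{u} := fun A B f => K A ≤ (K B).comap f.hom

instance : (preservesFamily K).IsMultiplicative where
  id_mem _ := le_rfl
  comp_mem _ _ hf hg := hf.trans (Subgroup.comap_mono hg)

variable [∀ A, (K A).Normal]

def quotientBy (A : GrpCat.{u}) : A ⟶ of (A ⧸ K A) := ofHom (QuotientGroup.mk' (K A))

theorem ker_quotientBy (A : GrpCat.{u}) : (quotientBy K A).hom.ker = K A :=
  QuotientGroup.ker_mk' _

theorem quotientBy_mem_preservesFamily (A : GrpCat.{u}) : preservesFamily K (quotientBy K A) :=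
  fun x hx => by
    have hx' : (quotientBy K A).hom x = 1 := by rwa [← MonoidHom.mem_ker, ker_quotientBy]
    rw [Subgroup.mem_comap, hx']
    exact one_mem _

def quotientMap {A B : GrpCat.{u}} (f : A ⟶ B) (hf : preservesFamily K f) :
    of (A ⧸ K A) ⟶ of (B ⧸ K B) :=
  ofHom (QuotientGroup.map _ _ f.hom hf)

theorem quotientBy_comp_quotientMap {A B : GrpCat.{u}} (f : A ⟶ B) (hf : preservesFamily K f) :
    quotientBy K A ≫ quotientMap K f hf = f ≫ quotientBy K B :=
  rfl

theorem quotientMap_id (A : GrpCat.{u}) (h : preservesFamily K (𝟙 A)) :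
    quotientMap K (𝟙 A) h = 𝟙 _ := by
  ext
  rfl

theorem quotientMap_comp {A B C : GrpCat.{u}} (f : A ⟶ B) (g : B ⟶ C)
    (hf : preservesFamily K f) (hg : preservesFamily K g) (hfg : preservesFamily K (f ≫ g)) :
    quotientMap K (f ≫ g) hfg = quotientMap K f hf ≫ quotientMap K g hg := by
  ext
  rfl

theorem quotientMap_quotientBy (A : GrpCat.{u}) (h : preservesFamily K (quotientBy K A)) :
    quotientMap K (quotientBy K A) h = quotientBy K (of (A ⧸ K A)) := by
  ext
  rfl

def quotientClosure : MorphismProperty GrpCat.{u} :=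
  (isomorphisms GrpCat ⊔ ofHoms (quotientBy K)).multiplicativeClosure

instance : (quotientClosure K).IsMultiplicative := by
  unfold quotientClosure
  infer_instance

theorem quotientBy_mem_quotientClosure (A : GrpCat.{u}) : quotientClosure K (quotientBy K A) :=
  le_multiplicativeClosure _ _ (Or.inr ⟨A⟩)

def quotientMapMemClosure : MorphismProperty GrpCat.{u} := fun _ _ f =>
  ∃ hf : preservesFamily K f, quotientClosure K (quotientMap K f hf)

instance : (quotientMapMemClosure K).IsMultiplicative where
  id_mem A := ⟨le_rfl, by
    convert (quotientClosure K).id_mem _ using 1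
    exact quotientMap_id K A _⟩
  comp_mem f g := fun ⟨hf, hf'⟩ ⟨hg, hg'⟩ =>
    ⟨(preservesFamily K).comp_mem f g hf hg,
      by
        convert (quotientClosure K).comp_mem _ _ hf' hg' using 1
        exact quotientMap_comp K f g hf hg _⟩

variable {K} (hK : isomorphisms GrpCat ≤ preservesFamily K)
include hK

theorem quotientClosure_le_preservesFamily : quotientClosure K ≤ preservesFamily K :=
  (multiplicativeClosure_le_iff _ _).mpr
    (sup_le hK ((ofHoms_le_iff _ _).mpr (quotientBy_mem_preservesFamily K)))

theorem isIso_quotientMap {A B : GrpCat.{u}} (f : A ⟶ B) [IsIso f] (hf : preservesFamily K f) :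
    IsIso (quotientMap K f hf) := by
  have hinv : preservesFamily K (inv f) := hK _ (isomorphisms.infer_property _)
  refine ⟨quotientMap K (inv f) hinv, ?_, ?_⟩
  · rw [← quotientMap_comp K f (inv f) hf hinv ((preservesFamily K).comp_mem _ _ hf hinv)]
    simp only [IsIso.hom_inv_id, quotientMap_id]
  · rw [← quotientMap_comp K (inv f) f hinv hf ((preservesFamily K).comp_mem _ _ hinv hf)]
    simp only [IsIso.inv_hom_id, quotientMap_id]

theorem quotientClosure_le_quotientMapMemClosure :
    quotientClosure K ≤ quotientMapMemClosure K := by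
  refine (multiplicativeClosure_le_iff _ _).mpr (sup_le ?_ ((ofHoms_le_iff _ _).mpr fun A => ?_))
  · intro _ _ f (hiso : IsIso f)
    have := isIso_quotientMap hK f (hK f hiso)
    exact ⟨hK f hiso, le_multiplicativeClosure _ _ (Or.inl (isomorphisms.infer_property _))⟩
  · refine ⟨quotientBy_mem_preservesFamily K A, ?_⟩
    rw [quotientMap_quotientBy]
    exact quotientBy_mem_quotientClosure K _

theorem quotientMap_mem_quotientClosure {A B : GrpCat.{u}} {f : A ⟶ B}
    (hf : quotientClosure K f) :
    quotientClosure K (quotientMap K f (quotientClosure_le_preservesFamily hK f hf)) :=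
  (quotientClosure_le_quotientMapMemClosure hK f hf).2

def quotientFunctor :
    WideSubcategory (quotientClosure K) ⥤ WideSubcategory (quotientClosure K) where
  obj A := ⟨of (A.obj ⧸ K A.obj)⟩
  map f := ⟨quotientMap K f.1 _, quotientMap_mem_quotientClosure hK f.2⟩
  map_id A := WideSubcategory.hom_ext (h := quotientMap_id K A.obj _)
  map_comp f g := WideSubcategory.hom_ext (h := quotientMap_comp K f.1 g.1 _ _ _)

def quotientNatTrans : 𝟭 (WideSubcategory (quotientClosure K)) ⟶ quotientFunctor hK where
  app A := ⟨quotientBy K A.obj, quotientBy_mem_quotientClosure K A.obj⟩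
  naturality _ _ f := WideSubcategory.hom_ext (h := (quotientBy_comp_quotientMap K f.1 _).symm)

theorem ker_quotientNatTrans_app (A : WideSubcategory (quotientClosure K)) :
    ((quotientNatTrans hK).app A).1.hom.ker = K A.obj :=
  ker_quotientBy K A.obj

end GrpCat

theorem comap_ker_natTrans_app {W : MorphismProperty GrpCat.{u}} [W.IsMultiplicative]
    {U : WideSubcategory W ⥤ WideSubcategory W} (ε : 𝟭 (WideSubcategory W) ⟶ U)
    {X : WideSubcategory W} (e : X ≅ X) :
    (ε.app X).1.hom.ker.comap e.hom.1.hom = (ε.app X).1.hom.ker := by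
  have hinj : Function.Injective (U.map e.hom).1.hom :=
    ((wideSubcategoryInclusion W).mapIso (U.mapIso e)).groupIsoToMulEquiv.injective
  have hnat : (ε.app X).1.hom.comp e.hom.1.hom = (U.map e.hom).1.hom.comp (ε.app X).1.hom :=
    congrArg (fun f => f.1.hom) (ε.naturality e.hom)
  rw [MonoidHom.comap_ker, hnat, MonoidHom.ker_comp_of_injective _ _ hinj]

theorem characteristic_ker_natTrans_app {W : MorphismProperty GrpCat.{u}} [W.IsMultiplicative]
    (hW : isomorphisms GrpCat ≤ W) {U : WideSubcategory W ⥤ WideSubcategory W}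
    (ε : 𝟭 (WideSubcategory W) ⟶ U) (X : WideSubcategory W) :
    (ε.app X).1.hom.ker.Characteristic :=
  Subgroup.characteristic_iff_comap_eq.mpr fun φ =>
    comap_ker_natTrans_app ε (WideSubcategory.isoMk φ.toGrpIso
      (hW _ (isomorphisms.infer_property _)) (hW _ (isomorphisms.infer_property _)))

theorem characteristic_iff_wideSubcategory_unit (G : GrpCat) (H : Subgroup G) :
    H.Characteristic ↔
      ∃ (W : MorphismProperty GrpCat) (hW : W.IsMultiplicative),
        MorphismProperty.isomorphisms GrpCat ≤ W ∧
        (haveI := hW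
          ∃ (U : WideSubcategory W ⥤ WideSubcategory W)
            (ε : 𝟭 (WideSubcategory W) ⟶ U),
              H = MonoidHom.ker (ε.app (WideSubcategory.mk G)).1.hom) := by
  constructor
  · intro hH
    let K : ∀ A : GrpCat, Subgroup A := fun A => H.supMapEquiv A
    have hK : isomorphisms GrpCat ≤ GrpCat.preservesFamily K := fun A B e _ =>
      Subgroup.map_le_iff_le_comap.mp (H.map_supMapEquiv_le (asIso e).groupIsoToMulEquiv)
    refine ⟨GrpCat.quotientClosure K, inferInstance,
      le_sup_left.trans (le_multiplicativeClosure _),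
      GrpCat.quotientFunctor hK, GrpCat.quotientNatTrans hK, ?_⟩
    rw [GrpCat.ker_quotientNatTrans_app]
    exact H.supMapEquiv_self.symm
  · rintro ⟨W, hW, hiso, U, ε, hker⟩
    rw [hker]
    exact characteristic_ker_natTrans_app hiso ε _
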